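/- arXiv:2002.06251 — 3 statements merged into one kernel-verified Lean document; each statement's English description precedes it below -/
import Mathlib

section
/- Let N_f and c be integers with 1 ≤ c ≤ N_f, and let S be the N_f × C(N_f,c) cache state matrix. For every vector x = (x_G), indexed by the c-element subsets G of {1,…,N_f}, with all entries nonnegative, one has ‖Sx‖² = Σ_{l=1}^{N_f} ( Σ_{G : l ∈ G} x_G )² ≥ c · Σ_G x_G² = c‖x‖². In particular, ‖Sx‖ ≥ √c for every nonnegative unit vector x. -/
/-!
Each column of `S` has exactly `c` ones, so double counting gives
`c ‖x‖² = Σ_l Σ_{G ∋ l} x_G²`. For nonnegative entries, `Σ_{G ∋ l} x_G² ≤ (Σ_{G ∋ l} x_G)²`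
termwise in `l`, and the right-hand sides add up to `‖Sx‖²`.
-/

open Finset

section Incidence

variable {α β : Type*} [Fintype β] (r : α → β → Prop) [∀ a b, Decidable (r a b)]

theorem Matrix.mulVec_of_ite_one_zero {R : Type*} [NonAssocSemiring R] (x : β → R) (a : α) :
    (Matrix.of fun a b => if r a b then (1 : R) else 0).mulVec x a = ∑ b with r a b, x b := by
  simp only [Matrix.mulVec, dotProduct, Matrix.of_apply, ite_mul, one_mul, zero_mul,
    sum_filter]

theorem sum_sum_filter_eq_sum_card_nsmul [Fintype α] {M : Type*} [AddCommMonoid M] (f : β → M) :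
    ∑ a, ∑ b with r a b, f b = ∑ b, #{a | r a b} • f b := by
  rw [sum_comm' (t' := univ) (s' := fun b => {a | r a b}) (by simp)]
  simp only [sum_const]

theorem card_mul_sum_sq_le_sum_sq_sum_filter [Fintype α] {c : ℕ} (hr : ∀ b, #{a | r a b} = c)
    {x : β → ℝ} (hx : ∀ b, 0 ≤ x b) :
    (c : ℝ) * ∑ b, x b ^ 2 ≤ ∑ a, (∑ b with r a b, x b) ^ 2 :=
  calc (c : ℝ) * ∑ b, x b ^ 2 = ∑ a, ∑ b with r a b, x b ^ 2 := by
        simp only [sum_sum_filter_eq_sum_card_nsmul, hr, nsmul_eq_mul, mul_sum]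
    _ ≤ ∑ a, (∑ b with r a b, x b) ^ 2 :=
        sum_le_sum fun _ _ => sum_sq_le_sq_sum_of_nonneg fun b _ => hx b

end Incidence

theorem cacheMatrix_norm_sq_lower_bound_general (Nf c : ℕ)
    (S : Matrix (Fin Nf) {G : Finset (Fin Nf) // G.card = c} ℝ)
    (hS : ∀ (l : Fin Nf) (G : {G : Finset (Fin Nf) // G.card = c}),
      S l G = if l ∈ G.val then 1 else 0)
    (x : {G : Finset (Fin Nf) // G.card = c} → ℝ) (hx : ∀ G, 0 ≤ x G) :
    (∑ l, (S.mulVec x l) ^ 2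
        = ∑ l : Fin Nf,
            (∑ G ∈ Finset.univ.filter
              (fun G : {G : Finset (Fin Nf) // G.card = c} => l ∈ G.val), x G) ^ 2)
    ∧ (c : ℝ) * ∑ G, (x G) ^ 2 ≤ ∑ l, (S.mulVec x l) ^ 2
    ∧ (∑ G, (x G) ^ 2 = 1 →
        Real.sqrt c ≤ Real.sqrt (∑ l, (S.mulVec x l) ^ 2)) := by
  obtain rfl : S = Matrix.of fun l G => if l ∈ G.val then 1 else 0 := Matrix.ext hS
  simp only [Matrix.mulVec_of_ite_one_zero, true_and]
  have hcard (G : {G : Finset (Fin Nf) // G.card = c}) : #{l | l ∈ G.val} = c := by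
    rw [filter_mem_eq_inter, univ_inter, G.2]
  have hbound := card_mul_sum_sq_le_sum_sq_sum_filter _ hcard hx
  refine ⟨hbound, fun hunit => Real.sqrt_le_sqrt ?_⟩
  simpa only [hunit, mul_one] using hbound

/-- For the `N_f × C(N_f,c)` cache state matrix `S` (with `1 ≤ c ≤ N_f`)
and every nonnegative vector `x` indexed by the `c`-element subsets `G` of `{1,…,N_f}`:
`‖Sx‖² = Σ_l (Σ_{G : l ∈ G} x_G)² ≥ c · Σ_G x_G² = c‖x‖²`; in particular `‖Sx‖ ≥ √c`
for every nonnegative unit vector `x`. -/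
theorem cacheMatrix_norm_sq_lower_bound (Nf c : ℕ) (hc : 1 ≤ c) (hcN : c ≤ Nf)
    (S : Matrix (Fin Nf) {G : Finset (Fin Nf) // G.card = c} ℝ)
    (hS : ∀ (l : Fin Nf) (G : {G : Finset (Fin Nf) // G.card = c}),
      S l G = if l ∈ G.val then 1 else 0)
    (x : {G : Finset (Fin Nf) // G.card = c} → ℝ) (hx : ∀ G, 0 ≤ x G) :
    (∑ l, (S.mulVec x l) ^ 2
        = ∑ l : Fin Nf,
            (∑ G ∈ Finset.univ.filter
              (fun G : {G : Finset (Fin Nf) // G.card = c} => l ∈ G.val), x G) ^ 2)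
    ∧ (c : ℝ) * ∑ G, (x G) ^ 2 ≤ ∑ l, (S.mulVec x l) ^ 2
    ∧ (∑ G, (x G) ^ 2 = 1 →
        Real.sqrt c ≤ Real.sqrt (∑ l, (S.mulVec x l) ^ 2)) :=
  cacheMatrix_norm_sq_lower_bound_general Nf c S hS x hx
end

section
/- Let N_f and c be integers with 1 ≤ c < N_f, and let S be the N_f × C(N_f,c) cache state matrix. Then the N_f × N_f matrix S·Sᵀ is invertible (equivalently, positive definite). -/
/-!
If `S Sᵀ x = 0` then `‖Sᵀ x‖² = xᵀ S Sᵀ x = 0`, so `x` sums to zero over every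
`c`-subset. Comparing the subsets `T ∪ {i}` and `T ∪ {j}` for a `(c - 1)`-set `T` avoiding
`i` and `j` (which exists because `c < N_f`) shows that `x` is constant, and then
`c • x i = 0` forces `x = 0`.
-/

open Finset Matrix

theorem Matrix.isUnit_mul_transpose_of_transpose_mulVec_eq_zero {R m n : Type*} [Field R]
    [LinearOrder R] [IsStrictOrderedRing R] [Fintype m] [Fintype n] [DecidableEq m]
    (A : Matrix m n R) (hA : ∀ v, Aᵀ *ᵥ v = 0 → v = 0) : IsUnit (A * Aᵀ) := by
  rw [← mulVec_injective_iff_isUnit, ← coe_mulVecLin, ← LinearMap.ker_eq_bot,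
    ker_mulVecLin_eq_bot_iff]
  intro v hv
  have hnorm : v ⬝ᵥ ((A * Aᵀ) *ᵥ v) = (Aᵀ *ᵥ v) ⬝ᵥ (Aᵀ *ᵥ v) := by
    rw [← mulVec_mulVec, dotProduct_mulVec, mulVec_transpose]
  rw [hv, dotProduct_zero, eq_comm] at hnorm
  exact hA v (dotProduct_self_eq_zero.mp hnorm)

section CardSums

variable {α M : Type*} [Fintype α] [DecidableEq α] {c : ℕ} {x : α → M}

theorem apply_eq_apply_of_sum_card_eq [AddCancelCommMonoid M] {s : M} (hc : 1 ≤ c)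
    (hcα : c < Fintype.card α) (h : ∀ G : Finset α, #G = c → ∑ l ∈ G, x l = s)
    (i j : α) : x i = x j := by
  rcases eq_or_ne i j with rfl | hij
  · rfl
  have hcard : c - 1 ≤ #(univ \ {i, j}) := by
    rw [card_sdiff_of_subset (subset_univ _), card_univ, card_pair hij]
    omega
  obtain ⟨T, hT, hTc⟩ := exists_subset_card_eq hcard
  have hiT : i ∉ T := fun hi => by simpa using hT hi
  have hjT : j ∉ T := fun hj => by simpa using hT hj
  have hi := h (insert i T) (by rw [card_insert_of_notMem hiT]; omega)
  have hj := h (insert j T) (by rw [card_insert_of_notMem hjT]; omega)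
  rw [sum_insert hiT] at hi
  rw [sum_insert hjT, ← hi] at hj
  exact (add_right_cancel hj).symm

theorem eq_zero_of_sum_card_eq_zero [AddCommGroup M] [IsAddTorsionFree M] (hc : 1 ≤ c)
    (hcα : c < Fintype.card α) (h : ∀ G : Finset α, #G = c → ∑ l ∈ G, x l = 0) :
    x = 0 := by
  funext i
  obtain ⟨G, -, hG⟩ := exists_subset_card_eq (s := (univ : Finset α)) (by simpa using hcα.le)
  have hsum : ∑ l ∈ G, x l = c • x i := by
    rw [sum_congr rfl fun l _ => apply_eq_apply_of_sum_card_eq hc hcα h l i, sum_const, hG]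
  rw [h G hG, eq_comm, nsmul_eq_zero_iff_right (by omega)] at hsum
  exact hsum

end CardSums

theorem Matrix.transpose_mulVec_apply_of_incidence {α ι R : Type*} [Fintype α] [DecidableEq α]
    [Semiring R] {S : Matrix α ι R} {f : ι → Finset α}
    (hS : ∀ l i, S l i = if l ∈ f i then 1 else 0)
    (x : α → R) (i : ι) : (Sᵀ *ᵥ x) i = ∑ l ∈ f i, x l := by
  simp [mulVec, dotProduct, hS]

/-- For the `N_f × C(N_f,c)` cache state matrix `S` with `1 ≤ c < N_f`,
the `N_f × N_f` matrix `S · Sᵀ` is invertible. -/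
theorem cacheMatrix_mul_transpose_invertible (Nf c : ℕ) (hc : 1 ≤ c) (hcN : c < Nf)
    (S : Matrix (Fin Nf) {G : Finset (Fin Nf) // G.card = c} ℝ)
    (hS : ∀ (l : Fin Nf) (G : {G : Finset (Fin Nf) // G.card = c}),
      S l G = if l ∈ G.val then 1 else 0) :
    IsUnit (S * S.transpose) := by
  refine S.isUnit_mul_transpose_of_transpose_mulVec_eq_zero fun x hx => ?_
  refine eq_zero_of_sum_card_eq_zero hc (by simpa using hcN) fun G hG => ?_
  rw [← transpose_mulVec_apply_of_incidence (f := Subtype.val) hS x ⟨G, hG⟩, hx,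
    Pi.zero_apply]
end

section
/- Let N_f and c be integers with 1 ≤ c ≤ N_f, and let p = (p_1,…,p_{N_f}) be a real vector with 0 ≤ p_k ≤ 1 for all k and Σ_{k=1}^{N_f} p_k = c. Then there exists a probability vector η, indexed by the c-element subsets of {1,…,N_f}, such that S η = p, where S is the cache state matrix; that is, every vector of content caching probabilities summing to the cache size c can be implemented by a probabilistic placement over cache states that each store exactly c contents. -/
/-!
Fix a set `T` of `c` columns and form the `N_f × N_f` matrix with entries `p k / c` in the
columns of `T` and `(1 - p k) / (N_f - c)` elsewhere. It is doubly stochastic, so by Birkhoff's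
theorem it is a convex combination of permutation matrices. Summing the columns of `T`, the
permutation `σ` contributes the indicator vector of the `c`-set `σ⁻¹(T)`, and the whole matrix
contributes `p`.
-/

open Finset

/-- Holds also for `m = 0`, where `x / 0 = 0`, because then `q = 0`. -/
lemma mul_div_cancel_of_sum_eq {ι : Type*} [Fintype ι] {q : ι → ℝ} {m : ℝ}
    (hq : ∀ k, 0 ≤ q k) (hsum : ∑ k, q k = m) (k : ι) : m * (q k / m) = q k := by
  rcases eq_or_ne m 0 with rfl | hm
  · rw [Fintype.sum_eq_zero_iff_of_nonneg hq] at hsum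
    simp [congrFun hsum k]
  · exact mul_div_cancel₀ _ hm

lemma exists_mem_doublyStochastic_sum_cols_eq {ι : Type*} [Fintype ι] [DecidableEq ι]
    (T : Finset ι) {p : ι → ℝ} (hp0 : ∀ k, 0 ≤ p k) (hp1 : ∀ k, p k ≤ 1)
    (hpsum : ∑ k, p k = T.card) :
    ∃ M ∈ doublyStochastic ℝ ι, ∀ k, ∑ j ∈ T, M k j = p k := by
  have hq0 : ∀ k, 0 ≤ 1 - p k := fun k => sub_nonneg.2 (hp1 k)
  have hqsum : ∑ k, (1 - p k) = (#Tᶜ : ℝ) := by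
    simp [sum_sub_distrib, hpsum, card_compl, Nat.cast_sub (card_le_univ T)]
  set M : Matrix ι ι ℝ := .of fun k j => if j ∈ T then p k / #T else (1 - p k) / #Tᶜ with hM
  have hsum_T : ∀ k, ∑ j ∈ T, M k j = p k := fun k => by
    simp only [hM, Matrix.of_apply]
    rw [sum_ite_of_true fun _ h => h, sum_const, nsmul_eq_mul,
      mul_div_cancel_of_sum_eq hp0 hpsum]
  have hsum_compl : ∀ k, ∑ j ∈ Tᶜ, M k j = 1 - p k := fun k => by
    simp only [hM, Matrix.of_apply]
    rw [sum_ite_of_false fun _ h => mem_compl.1 h, sum_const, nsmul_eq_mul,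
      mul_div_cancel_of_sum_eq hq0 hqsum]
  refine ⟨M, mem_doublyStochastic_iff_sum.2 ⟨fun k j => ?_, fun k => ?_, fun j => ?_⟩, hsum_T⟩
  · simp only [hM, Matrix.of_apply]
    split_ifs
    · exact div_nonneg (hp0 k) (Nat.cast_nonneg _)
    · exact div_nonneg (hq0 k) (Nat.cast_nonneg _)
  · rw [← sum_add_sum_compl T, hsum_T, hsum_compl, add_sub_cancel]
  · simp only [hM, Matrix.of_apply]
    split_ifs with hj
    · rw [← sum_div, hpsum, div_self (Nat.cast_ne_zero.2 (card_ne_zero_of_mem hj))]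
    · rw [← sum_div, hqsum,
        div_self (Nat.cast_ne_zero.2 (card_ne_zero_of_mem (mem_compl.2 hj)))]

theorem exists_convexCombination_indicator_card_eq {ι : Type*} [Fintype ι] [DecidableEq ι]
    {c : ℕ} {p : ι → ℝ} (hp0 : ∀ k, 0 ≤ p k) (hp1 : ∀ k, p k ≤ 1) (hpsum : ∑ k, p k = c) :
    ∃ η : {G : Finset ι // G.card = c} → ℝ, (∀ G, 0 ≤ η G) ∧ ∑ G, η G = 1 ∧
      ∀ k, ∑ G, (if k ∈ G.val then η G else 0) = p k := by
  have hc : c ≤ Fintype.card ι := by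
    have : ∑ k, p k ≤ ∑ _k : ι, (1 : ℝ) := sum_le_sum fun k _ => hp1 k
    rw [hpsum, sum_const, card_univ, nsmul_one] at this
    exact_mod_cast this
  obtain ⟨T, -, hT⟩ :=
    exists_subset_card_eq (s := (univ : Finset ι)) (n := c) (by rwa [card_univ])
  obtain ⟨M, hM, hMT⟩ := exists_mem_doublyStochastic_sum_cols_eq T hp0 hp1 (by rw [hpsum, hT])
  obtain ⟨w, hw0, hw1, rfl⟩ := exists_eq_sum_perm_of_mem_doublyStochastic hM
  let g : Equiv.Perm ι → {G : Finset ι // G.card = c} :=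
    fun σ => ⟨T.map σ.symm.toEmbedding, by rw [card_map, hT]⟩
  refine ⟨fun G => ∑ σ with g σ = G, w σ, fun G => sum_nonneg fun σ _ => hw0 σ,
    by rw [sum_fiberwise, hw1], fun k => ?_⟩
  calc ∑ G, (if k ∈ G.val then ∑ σ with g σ = G, w σ else 0)
      = ∑ G, ∑ σ with g σ = G, (if k ∈ (g σ).val then w σ else 0) := by
        refine sum_congr rfl fun G _ => ?_
        split_ifs with hk
        · exact sum_congr rfl fun σ hσ => by rw [(mem_filter.1 hσ).2, if_pos hk]
        · exact (sum_eq_zero fun σ hσ => by rw [(mem_filter.1 hσ).2, if_neg hk]).symm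
    _ = ∑ σ, (if σ k ∈ T then w σ else 0) := by
        rw [sum_fiberwise]
        simp [g, mem_map_equiv]
    _ = ∑ j ∈ T, (∑ σ, w σ • σ.permMatrix ℝ) k j := by
        simp [Matrix.sum_apply, Equiv.Perm.permMatrix, PEquiv.toMatrix_apply, sum_comm (s := T)]
    _ = p k := hMT k

theorem cacheMatrix_placement_feasible_general (Nf c : ℕ)
    (S : Matrix (Fin Nf) {G : Finset (Fin Nf) // G.card = c} ℝ)
    (hS : ∀ (l : Fin Nf) (G : {G : Finset (Fin Nf) // G.card = c}),
      S l G = if l ∈ G.val then 1 else 0)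
    (p : Fin Nf → ℝ) (hp0 : ∀ k, 0 ≤ p k) (hp1 : ∀ k, p k ≤ 1)
    (hpsum : ∑ k, p k = (c : ℝ)) :
    ∃ η : {G : Finset (Fin Nf) // G.card = c} → ℝ,
      (∀ G, 0 ≤ η G) ∧ (∑ G, η G = 1) ∧ S.mulVec η = p := by
  obtain ⟨η, hη0, hη1, hηp⟩ := exists_convexCombination_indicator_card_eq hp0 hp1 hpsum
  refine ⟨η, hη0, hη1, funext fun l => ?_⟩
  simp only [Matrix.mulVec, dotProduct, hS, ite_mul, one_mul, zero_mul]
  exact hηp l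

/-- Let `1 ≤ c ≤ N_f` and let `p` satisfy `0 ≤ p_k ≤ 1` for all `k`
and `Σ_k p_k = c`. Then there exists a probability vector `η` over the `c`-element
subsets of `{1,…,N_f}` with `S η = p`, where `S` is the cache state matrix. -/
theorem cacheMatrix_placement_feasible (Nf c : ℕ) (hc : 1 ≤ c) (hcN : c ≤ Nf)
    (S : Matrix (Fin Nf) {G : Finset (Fin Nf) // G.card = c} ℝ)
    (hS : ∀ (l : Fin Nf) (G : {G : Finset (Fin Nf) // G.card = c}),
      S l G = if l ∈ G.val then 1 else 0)
    (p : Fin Nf → ℝ) (hp0 : ∀ k, 0 ≤ p k) (hp1 : ∀ k, p k ≤ 1)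
    (hpsum : ∑ k, p k = (c : ℝ)) :
    ∃ η : {G : Finset (Fin Nf) // G.card = c} → ℝ,
      (∀ G, 0 ≤ η G) ∧ (∑ G, η G = 1) ∧ S.mulVec η = p :=
  cacheMatrix_placement_feasible_general Nf c S hS p hp0 hp1 hpsum
end
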